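/- Let c' be an integer with c' ≥ c > 0 and k ≥ 2(c' + 1). Then for all n ≥ 1, a_{n+(k−c')} > ∑ a_{n−i(k−c)}, where the sum ranges over all nonnegative integers i with n − i(k−c) ≥ 1. -/

import Mathlib

/-!
Write `d = k - c`, `e = k - c'` and `T n` for the sum on the left. Since a term of index `x > k`
is compatible with every index `≤ x - k`, the LID sequence satisfies `a (x + 1) ≥ a x + a (x - k)`
for `x > k`; applying this twice gives `a (n + e) ≥ a (n + e - 2) + a (n + e - 1 - k) + a (n + e - 2 - k)`.
On the other hand `T n = a n + a (n - d) + T (n - 2d)`, and the three terms are dominated termwise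
(the last one strictly, by induction) as soon as `e ≥ 2`, `d + e ≥ k + 2` and `2d ≥ k + 2`.
-/

/-- `L` is an `S`-legal index set: all pairwise index differences avoid `S`. -/
def SlidLegal (S : Set ℕ) (L : Finset ℕ) : Prop :=
  ∀ i ∈ L, ∀ j ∈ L, ((i : ℤ) - (j : ℤ)).natAbs ∉ S

/-- `m` has an `S`-LID decomposition using the terms `a 1, …, a n`. -/
def SlidDecomp (S : Set ℕ) (a : ℕ → ℕ) (n m : ℕ) : Prop :=
  ∃ L : Finset ℕ, L ⊆ Finset.Icc 1 n ∧ SlidLegal S L ∧ m = ∑ ℓ ∈ L, a ℓ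

/-- `a` is the `S`-LID sequence (indexed from `1`; `a 0` is unconstrained):
for each `n ≥ 1`, `a n` is the least positive integer with no `S`-LID
decomposition using `a 1, …, a (n-1)`. -/
def IsSlidSeq (S : Set ℕ) (a : ℕ → ℕ) : Prop :=
  ∀ n, 1 ≤ n → IsLeast {m | 0 < m ∧ ¬ SlidDecomp S a (n - 1) m} (a n)

open Finset

variable {S : Set ℕ} {a : ℕ → ℕ}

theorem SlidDecomp.mono {x y m : ℕ} (hxy : x ≤ y) (hd : SlidDecomp S a x m) :
    SlidDecomp S a y m :=
  let ⟨L, hsub, hleg, hsum⟩ := hd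
  ⟨L, hsub.trans (Icc_subset_Icc_right hxy), hleg, hsum⟩

theorem slidDecomp_self (h0 : 0 ∉ S) {x : ℕ} (hx : 1 ≤ x) : SlidDecomp S a x (a x) :=
  ⟨{x}, by simpa using hx, by simpa [SlidLegal] using h0, by simp⟩

namespace IsSlidSeq

variable (ha : IsSlidSeq S a)
include ha

theorem pos {n : ℕ} (hn : 1 ≤ n) : 0 < a n := (ha n hn).1.1

theorem le_of_le {x y : ℕ} (hx : 1 ≤ x) (hxy : x ≤ y) : a x ≤ a y :=
  (ha x hx).2 ⟨ha.pos (hx.trans hxy), fun hd => (ha y (hx.trans hxy)).1.2 (hd.mono (by omega))⟩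

theorem lt_of_lt (h0 : 0 ∉ S) {x y : ℕ} (hx : 1 ≤ x) (hxy : x < y) : a x < a y := by
  refine (ha.le_of_le hx hxy.le).lt_of_ne fun heq => (ha y (by omega)).1.2 ?_
  exact heq ▸ (slidDecomp_self h0 hx).mono (by omega)

theorem slidDecomp_of_lt {y m : ℕ} (hy : 1 ≤ y) (hm : 0 < m) (hlt : m < a y) :
    SlidDecomp S a (y - 1) m := by
  by_contra hd
  exact (ha y hy).2 ⟨hm, hd⟩ |>.not_gt hlt

/-- Index `x` is compatible with all indices below `x - k`, so if `a (x + 1) - a x < a (x - k)`,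
adding `x` to a decomposition of that difference would decompose `a (x + 1)`. -/
theorem add_le_succ (h0 : 0 ∉ S) {k : ℕ} (hSk : ∀ s ∈ S, s ≤ k) {x : ℕ} (hx : k + 1 ≤ x) :
    a x + a (x - k) ≤ a (x + 1) := by
  by_contra! hgap
  have hlt := ha.lt_of_lt h0 (x := x) (y := x + 1) (by omega) (by omega)
  obtain ⟨L, hsub, hleg, hsum⟩ :=
    ha.slidDecomp_of_lt (y := x - k) (m := a (x + 1) - a x) (by omega) (by omega) (by omega)
  have hL : ∀ z ∈ L, 1 ≤ z ∧ z + k < x := fun z hz => by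
    have := mem_Icc.1 (hsub hz); omega
  have hfar : ∀ z ∈ L, ((x : ℤ) - z).natAbs ∉ S := fun z hz hmem => by
    have := hSk _ hmem; have := hL z hz; omega
  have hxL : x ∉ L := fun h => by have := hL x h; omega
  refine (ha (x + 1) (by omega)).1.2 ⟨insert x L, ?_, ?_, ?_⟩
  · refine insert_subset (mem_Icc.2 ⟨by omega, by omega⟩) fun z hz => ?_
    have := hL z hz
    exact mem_Icc.2 ⟨by omega, by omega⟩
  · simp only [SlidLegal, mem_insert, forall_eq_or_imp]
    refine ⟨⟨by simpa using h0, hfar⟩, fun z hz => ⟨?_, hleg z hz⟩⟩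
    rw [← Int.natAbs_neg, neg_sub]
    exact hfar z hz
  · rw [sum_insert hxL, ← hsum]
    omega

theorem add_add_le_add_two (h0 : 0 ∉ S) {k : ℕ} (hSk : ∀ s ∈ S, s ≤ k) {x : ℕ}
    (hx : k + 1 ≤ x) : a x + a (x - k) + a (x + 1 - k) ≤ a (x + 2) := by
  have h1 := ha.add_le_succ h0 hSk hx
  have h2 := ha.add_le_succ h0 hSk (x := x + 1) (by omega)
  rw [show x + 1 + 1 = x + 2 by rfl] at h2
  omega

end IsSlidSeq

def gapSum (a : ℕ → ℕ) (d n : ℕ) : ℕ :=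
  ∑ i ∈ (range n).filter (fun i => 1 ≤ n - i * d), a (n - i * d)

theorem filter_range_one_le_sub_mul {d : ℕ} (hd : 0 < d) (n : ℕ) :
    (range n).filter (fun i => 1 ≤ n - i * d) = range ((n + d - 1) / d) := by
  ext i
  rw [mem_filter, mem_range, mem_range, Nat.lt_div_iff_mul_lt hd]
  have : i ≤ i * d := Nat.le_mul_of_pos_right i hd
  omega

theorem gapSum_zero (a : ℕ → ℕ) (d : ℕ) : gapSum a d 0 = 0 := rfl

theorem gapSum_eq_add {d n : ℕ} (hd : 0 < d) (hn : 1 ≤ n) :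
    gapSum a d n = a n + gapSum a d (n - d) := by
  have hcount : (n + d - 1) / d = (n - d + d - 1) / d + 1 := by
    rcases le_or_gt d n with hdn | hnd
    · rw [← Nat.add_div_right _ hd]; congr 1; omega
    · rw [Nat.div_eq_of_lt (by omega : n - d + d - 1 < d)]
      exact Nat.div_eq_of_lt_le (by omega) (by omega)
  rw [gapSum, gapSum, filter_range_one_le_sub_mul hd, filter_range_one_le_sub_mul hd, hcount,
    sum_range_succ', add_comm]
  simp only [zero_mul, Nat.sub_zero, add_mul, one_mul, Nat.sub_sub, add_comm d]

theorem IsSlidSeq.gapSum_lt (ha : IsSlidSeq S a) (h0 : 0 ∉ S) {k d e : ℕ}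
    (hSk : ∀ s ∈ S, s ≤ k) (he : 2 ≤ e) (hde : k + 2 ≤ d + e) (hd : k + 2 ≤ 2 * d) :
    ∀ n, 1 ≤ n → gapSum a d n < a (n + e) := by
  intro n hn
  induction n using Nat.strong_induction_on with
  | _ n ih =>
    rw [gapSum_eq_add (by omega) hn]
    rcases le_or_gt n d with hnd | hdn
    · rw [Nat.sub_eq_zero_of_le hnd, gapSum_zero]
      simpa using ha.lt_of_lt h0 hn (by omega)
    rw [gapSum_eq_add (by omega) (by omega)]
    have hrest : gapSum a d (n - d - d) < a (n + e - 2 - k) := by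
      rcases Nat.eq_zero_or_pos (n - d - d) with h | h
      · rw [h, gapSum_zero]
        exact ha.pos (by omega)
      · exact (ih _ (by omega) h).trans_le (ha.le_of_le (by omega) (by omega))
    have hsup := ha.add_add_le_add_two h0 hSk (x := n + e - 2) (by omega)
    rw [show n + e - 2 + 2 = n + e by omega, show n + e - 2 + 1 - k = n + e - 1 - k by omega]
      at hsup
    have hfirst := ha.le_of_le hn (show n ≤ n + e - 2 by omega)
    have hsecond := ha.le_of_le (x := n - d) (by omega) (show n - d ≤ n + e - 1 - k by omega)
    omega

theorem gap_sum_bound_general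
    (S : Finset ℕ) (hne : S.Nonempty) (hpos : ∀ s ∈ S, 0 < s)
    (k : ℕ) (hk : k = S.max' hne)
    (c : ℕ)
    (a : ℕ → ℕ) (ha : IsSlidSeq ↑S a)
    (c' : ℕ) (hcc : c ≤ c') (hk2 : 2 * (c' + 1) ≤ k) :
    ∀ n, 1 ≤ n →
      (∑ i ∈ (Finset.range n).filter (fun i => 1 ≤ n - i * (k - c)),
        a (n - i * (k - c))) < a (n + (k - c')) := by
  have h0 : 0 ∉ (S : Set ℕ) := fun h => (hpos 0 h).false
  have hSk : ∀ s ∈ (S : Set ℕ), s ≤ k := hk ▸ fun s hs => S.le_max' s hs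
  exact ha.gapSum_lt h0 hSk (by omega) (by omega) (by omega)

theorem gap_sum_bound
    (S : Finset ℕ) (hne : S.Nonempty) (hpos : ∀ s ∈ S, 0 < s)
    (k : ℕ) (hk : k = S.max' hne)
    (c : ℕ) (hc : 0 < c)
    (hleast : IsLeast {m | 0 < m ∧ m ∉ (S : Set ℕ)} (k - c))
    (a : ℕ → ℕ) (ha : IsSlidSeq ↑S a)
    (c' : ℕ) (hcc : c ≤ c') (hk2 : 2 * (c' + 1) ≤ k) :
    ∀ n, 1 ≤ n →
      (∑ i ∈ (Finset.range n).filter (fun i => 1 ≤ n - i * (k - c)),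
        a (n - i * (k - c))) < a (n + (k - c')) :=
  gap_sum_bound_general S hne hpos k hk c a ha c' hcc hk2
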